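/- Let μ be a finite Borel measure on 𝕋^d with I_α(μ) < ∞ and Fourier decay |μ̂(ξ)| ≤ C_F (1+|ξ|)^{−β/2} for all ξ ∈ ℤ^d, where β > 0. Then μ̂ ∈ ℓ^q(ℤ^d) for q = 2(β + d − α)/β, with ‖μ̂‖_{ℓ^q}^q ≤ I_α(μ) · C_F^{q−2}. -/

import Mathlib

open MeasureTheory

/-- Fourier coefficient `μ̂(ξ) = ∫ e^{−2πi ξ·x} dμ(x)` of a measure on the `d`-torus. -/
noncomputable def torusFourier {d : ℕ} (μ : Measure (Fin d → AddCircle (1:ℝ)))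
    (ξ : Fin d → ℤ) : ℂ :=
  ∫ x, (∏ i, (fourier (-(ξ i)) (x i) : ℂ)) ∂μ

/-- Euclidean norm of a lattice point `ξ ∈ ℤ^d`. -/
noncomputable def zNorm {d : ℕ} (ξ : Fin d → ℤ) : ℝ := Real.sqrt (∑ i, ((ξ i : ℝ)) ^ 2)

/-!
Split `|μ̂|^q = |μ̂|² · |μ̂|^{q-2}` and bound the second factor by the decay hypothesis:
`|μ̂(ξ)|^{q-2} ≤ C_F^{q-2} (1+|ξ|)^{-(β/2)(q-2)}`, and `(β/2)(q-2) = d - α` is exactly the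
exponent of the energy weight, so the `ℓ^q` sum is dominated termwise by `C_F^{q-2} I_α(μ)`.
-/

lemma rpow_two_add_le_of_le_mul_rpow {a b C s p : ℝ} (ha : 0 ≤ a) (hb : 0 < b) (hp : 0 ≤ p)
    (h : a ≤ C * b ^ (-s)) : a ^ (2 + p) ≤ a ^ 2 * b ^ (-(s * p)) * C ^ p := by
  have hbs : 0 < b ^ (-s) := Real.rpow_pos_of_pos hb _
  have hC : 0 ≤ C := (mul_nonneg_iff_of_pos_right hbs).mp (ha.trans h)
  have hsplit : a ^ (2 + p) = a ^ 2 * a ^ p := by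
    rw [Real.rpow_add' ha (by positivity), Real.rpow_two]
  have hdecay : (C * b ^ (-s)) ^ p = C ^ p * b ^ (-(s * p)) := by
    rw [Real.mul_rpow hC hbs.le, ← Real.rpow_mul hb.le, neg_mul]
  calc a ^ (2 + p) = a ^ 2 * a ^ p := hsplit
    _ ≤ a ^ 2 * (C * b ^ (-s)) ^ p := by gcongr
    _ = a ^ 2 * b ^ (-(s * p)) * C ^ p := by rw [hdecay]; ring

lemma summable_rpow_two_add_and_tsum_le {ι : Type*} {f w : ι → ℝ} {C s p t : ℝ}
    (hf : ∀ i, 0 ≤ f i) (hw : ∀ i, 0 < w i) (hp : 0 ≤ p) (hst : s * p = t)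
    (hdecay : ∀ i, f i ≤ C * w i ^ (-s)) (hI : Summable fun i => f i ^ 2 * w i ^ (-t)) :
    Summable (fun i => f i ^ (2 + p)) ∧
      ∑' i, f i ^ (2 + p) ≤ (∑' i, f i ^ 2 * w i ^ (-t)) * C ^ p := by
  have hle : ∀ i, f i ^ (2 + p) ≤ f i ^ 2 * w i ^ (-t) * C ^ p := fun i =>
    hst ▸ rpow_two_add_le_of_le_mul_rpow (hf i) (hw i) hp (hdecay i)
  have hsum : Summable fun i => f i ^ (2 + p) :=
    (hI.mul_right _).of_nonneg_of_le (fun i => Real.rpow_nonneg (hf i) _) hle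
  refine ⟨hsum, ?_⟩
  rw [← tsum_mul_right]
  exact hsum.tsum_le_tsum hle (hI.mul_right _)

theorem stmt4_general {d : ℕ}
    (μ : Measure (Fin d → AddCircle (1:ℝ)))
    (α β C_F : ℝ) (hαd : α < d) (hβ : 0 < β)
    (hI : Summable fun ξ : Fin d → ℤ =>
      ‖torusFourier μ ξ‖ ^ 2 * (1 + zNorm ξ) ^ (-((d : ℝ) - α)))
    (hdecay : ∀ ξ : Fin d → ℤ, ‖torusFourier μ ξ‖ ≤ C_F * (1 + zNorm ξ) ^ (-(β / 2))) :
    Summable (fun ξ : Fin d → ℤ => ‖torusFourier μ ξ‖ ^ (2 * (β + (d : ℝ) - α) / β)) ∧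
    ∑' ξ : Fin d → ℤ, ‖torusFourier μ ξ‖ ^ (2 * (β + (d : ℝ) - α) / β)
      ≤ (∑' ξ : Fin d → ℤ, ‖torusFourier μ ξ‖ ^ 2 * (1 + zNorm ξ) ^ (-((d : ℝ) - α)))
        * C_F ^ (2 * (β + (d : ℝ) - α) / β - 2) := by
  have hq : 2 * (β + (d : ℝ) - α) / β = 2 + 2 * ((d : ℝ) - α) / β := by
    field_simp; ring
  have hp : 0 ≤ 2 * ((d : ℝ) - α) / β := div_nonneg (by linarith) hβ.le
  have hst : β / 2 * (2 * ((d : ℝ) - α) / β) = (d : ℝ) - α := by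
    field_simp
  rw [hq, add_sub_cancel_left]
  exact summable_rpow_two_add_and_tsum_le (fun _ => norm_nonneg _)
    (fun ξ => add_pos_of_pos_of_nonneg one_pos (Real.sqrt_nonneg _)) hp hst hdecay hI

/-- If `μ` is a finite measure on `𝕋^d` with `I_α(μ) < ∞` and Fourier
decay `|μ̂(ξ)| ≤ C_F(1+|ξ|)^{−β/2}`, then `μ̂ ∈ ℓ^q` for `q = 2(β+d−α)/β`, with
`‖μ̂‖_{ℓ^q}^q ≤ I_α(μ) C_F^{q−2}`. -/
theorem stmt4 {d : ℕ} (hd : 0 < d)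
    (μ : Measure (Fin d → AddCircle (1:ℝ))) [IsFiniteMeasure μ]
    (α β C_F : ℝ) (hα : 0 < α) (hαd : α < d) (hβ : 0 < β) (hCF : 0 < C_F)
    (hI : Summable fun ξ : Fin d → ℤ =>
      ‖torusFourier μ ξ‖ ^ 2 * (1 + zNorm ξ) ^ (-((d : ℝ) - α)))
    (hdecay : ∀ ξ : Fin d → ℤ, ‖torusFourier μ ξ‖ ≤ C_F * (1 + zNorm ξ) ^ (-(β / 2))) :
    Summable (fun ξ : Fin d → ℤ => ‖torusFourier μ ξ‖ ^ (2 * (β + (d : ℝ) - α) / β)) ∧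
    ∑' ξ : Fin d → ℤ, ‖torusFourier μ ξ‖ ^ (2 * (β + (d : ℝ) - α) / β)
      ≤ (∑' ξ : Fin d → ℤ, ‖torusFourier μ ξ‖ ^ 2 * (1 + zNorm ξ) ^ (-((d : ℝ) - α)))
        * C_F ^ (2 * (β + (d : ℝ) - α) / β - 2) :=
  stmt4_general μ α β C_F hαd hβ hI hdecay
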